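/- arXiv:2605.00139 — 12 statements merged into one kernel-verified Lean document; each statement's English description precedes it below -/
import Mathlib

section
/- If (A,·,d) is a differential perm algebra (an associative algebra satisfying (ab)c=(ba)c with a derivation d), then the product a ≺ b := a·d(b) is left-symmetric (pre-Lie), i.e. (a≺b)≺c − a≺(b≺c) = (b≺a)≺c − b≺(a≺c) for all a,b,c. -/
/-- In a differential perm algebra, `a ≺ b := a * d b` is left-symmetric (pre-Lie). -/
theorem prec_left_symmetric {k : Type*} [Field k] [CharZero k]
    {A : Type*} [Ring A] [Algebra k A]
    (perm : ∀ a b c : A, a * b * c = b * a * c)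
    (d : A →ₗ[k] A) (hd : ∀ a b : A, d (a * b) = d a * b + a * d b) :
    ∀ a b c : A,
      (a * d b) * d c - a * d (b * d c) = (b * d a) * d c - b * d (a * d c) := by
  intro a b c
  rw [hd, hd, mul_add, mul_add, ← mul_assoc, ← mul_assoc, ← mul_assoc, ← mul_assoc,
    perm a b (d (d c))]
  abel
end

section
/- If (A,·,d) is a differential perm algebra, then the symmetrized product a ◆ b := a·d(b) + b·d(a) is commutative and satisfies the Tortken identity: (a◆b)◆(c◆d) − (a◆d)◆(b◆c) + ⟨a,b,c⟩◆d − ⟨a,d,c⟩◆b = 0, where ⟨x,y,z⟩ := (x◆y)◆z − x◆(y◆z). -/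
/-- The symmetrized product `a ◆ b = a d(b) + b d(a)`. -/
def bl {A : Type*} [Ring A] (d : A → A) (a b : A) : A := a * d b + b * d a

/-- The associator of `◆`. -/
def blAssoc {A : Type*} [Ring A] (d : A → A) (a b c : A) : A :=
  bl d (bl d a b) c - bl d a (bl d b c)

/-- In a differential perm algebra, `◆` is commutative and satisfies the Tortken identity. -/
theorem bl_comm_and_tortken {k : Type*} [Field k] [CharZero k]
    {A : Type*} [Ring A] [Algebra k A]
    (perm : ∀ a b c : A, a * b * c = b * a * c)
    (d : A →ₗ[k] A) (hd : ∀ a b : A, d (a * b) = d a * b + a * d b) :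
    (∀ a b : A, bl (⇑d) a b = bl (⇑d) b a) ∧
    (∀ a b c e : A,
      bl (⇑d) (bl (⇑d) a b) (bl (⇑d) c e)
        - bl (⇑d) (bl (⇑d) a e) (bl (⇑d) b c)
        + bl (⇑d) (blAssoc (⇑d) a b c) e
        - bl (⇑d) (blAssoc (⇑d) a e c) b = 0) := by
  have swap : ∀ x y z : A, x * (y * z) = y * (x * z) := fun x y z => by
    rw [← mul_assoc, ← mul_assoc, perm]
  refine ⟨fun a b => add_comm _ _, fun a b c e => ?_⟩
  simp only [bl, blAssoc, hd, map_add, map_sub, mul_add, add_mul, sub_mul, mul_sub,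
    mul_assoc]
  simp only [swap]
  abel
end

section
/- If (A,·,d) is a differential perm algebra, then the product a • b := d(a)·b + a·d(b) satisfies the Tortken di-identity (a•b)•(c•d) − (c•b)•(a•d) + (a,b,c)•d + b•(a•(c•d) − c•(a•d)) = 0, where (x,y,z) := (x•y)•z − x•(y•z). -/
/-- The product `a • b = d(a) b + a d(b)`. -/
def bu {A : Type*} [Ring A] (d : A → A) (a b : A) : A := d a * b + a * d b

/-- The associator of `•`. -/
def buAssoc {A : Type*} [Ring A] (d : A → A) (a b c : A) : A :=
  bu d (bu d a b) c - bu d a (bu d b c)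

/-- In a differential perm algebra, `•` satisfies the first Tortken di-identity. -/
theorem bu_tortken_di_one {k : Type*} [Field k] [CharZero k]
    {A : Type*} [Ring A] [Algebra k A]
    (perm : ∀ a b c : A, a * b * c = b * a * c)
    (d : A →ₗ[k] A) (hd : ∀ a b : A, d (a * b) = d a * b + a * d b) :
    ∀ a b c e : A,
      bu (⇑d) (bu (⇑d) a b) (bu (⇑d) c e)
        - bu (⇑d) (bu (⇑d) c b) (bu (⇑d) a e)
        + bu (⇑d) (buAssoc (⇑d) a b c) e
        + bu (⇑d) b (bu (⇑d) a (bu (⇑d) c e) - bu (⇑d) c (bu (⇑d) a e)) = 0 := by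
  intro a b c e
  have hlc : ∀ x y z : A, x * (y * z) = y * (x * z) := fun x y z => by
    rw [← mul_assoc, perm, mul_assoc]
  simp only [bu, buAssoc, map_add, map_sub, hd, mul_add, add_mul, sub_mul, mul_sub]
  simp only [mul_assoc, hlc]
  abel
end

section
/- If (A,·,d) is a differential perm algebra, then the product a • b := d(a)·b + a·d(b) satisfies the second Tortken di-identity (a•b)•(c•d) − (a•c)•(b•d) − b•((a,c,d)) + c•((a,b,d)) = 0, where (x,y,z) := (x•y)•z − x•(y•z). -/
/-- In a differential perm algebra, `•` satisfies the second Tortken di-identity. -/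
theorem bu_tortken_di_two {k : Type*} [Field k] [CharZero k]
    {A : Type*} [Ring A] [Algebra k A]
    (perm : ∀ a b c : A, a * b * c = b * a * c)
    (d : A →ₗ[k] A) (hd : ∀ a b : A, d (a * b) = d a * b + a * d b) :
    ∀ a b c e : A,
      bu (⇑d) (bu (⇑d) a b) (bu (⇑d) c e)
        - bu (⇑d) (bu (⇑d) a c) (bu (⇑d) b e)
        - bu (⇑d) b (buAssoc (⇑d) a c e)
        + bu (⇑d) c (buAssoc (⇑d) a b e) = 0 := by
  have sw : ∀ x y z t : A, x*y*z*t = y*x*z*t := fun x y z t => by rw [perm x y z]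
  have cyc : ∀ x y z t : A, x*y*z*t = y*z*x*t := fun x y z t => by
    rw [mul_assoc x y z, perm x (y*z) t, mul_assoc]
  have sw23 : ∀ x y z t : A, x*y*z*t = x*z*y*t := fun x y z t => by
    rw [cyc x y z t, sw y z x t, cyc x z y t]
  intro a b c e
  simp only [bu, buAssoc, hd, map_add, map_sub, mul_add, add_mul, sub_mul, mul_sub,
    ← mul_assoc]
  abel_nf
  simp only [sw, sw23]
  abel
end

section
/- Let (P,·) be a perm algebra over a field and let D be a δ-derivation of P, i.e. D(xy) = δ(D(x)y + xD(y)) for all x,y. Then the operation a ∘ b := D(a)·b − a·D(b) satisfies the left Leibniz identity (a∘b)∘c = a∘(b∘c) − b∘(a∘c). -/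
/-- The bracket `a ∘ b = D(a) b - a D(b)`. -/
def circOp {P : Type*} [Ring P] (D : P → P) (a b : P) : P := D a * b - a * D b

/-- For a perm algebra with a `δ`-derivation `D`, the product `a ∘ b = D(a)b - aD(b)`
satisfies the left Leibniz identity. -/
theorem circ_left_leibniz {k : Type*} [Field k] [CharZero k]
    {P : Type*} [Ring P] [Algebra k P]
    (perm : ∀ a b c : P, a * b * c = b * a * c)
    (δ : k) (D : P →ₗ[k] P)
    (hD : ∀ x y : P, D (x * y) = δ • (D x * y + x * D y)) :
    ∀ a b c : P,
      circOp (⇑D) (circOp (⇑D) a b) c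
        = circOp (⇑D) a (circOp (⇑D) b c) - circOp (⇑D) b (circOp (⇑D) a c) := by
  intro a b c
  simp only [circOp, map_sub, hD, smul_add, smul_sub, sub_mul, mul_sub, mul_add, add_mul,
    smul_mul_assoc, mul_smul_comm, ← mul_assoc]
  rw [perm b (D a) (D c), perm (D b) (D a) c, perm b (D (D a)) c, perm (D b) a (D c), perm a b (D (D c))]
  abel
end

section
/- Let (P,·) be a perm algebra with a δ-derivation D, and define {a,b} := D(a)·b − a·D(b). Then the transposed compatibility identity (δ+1)·x·{y,z} = {x·y, z} + {y, x·z} holds for all x,y,z in P. -/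
/-- The bracket `{a,b} = D(a) b - a D(b)`. -/
def brOp {P : Type*} [Ring P] (D : P → P) (a b : P) : P := D a * b - a * D b

/-- For a perm algebra with a `δ`-derivation `D`, the transposed compatibility identity
`(δ+1) x {y,z} = {xy,z} + {y,xz}` holds. -/
theorem transposed_compatibility {k : Type*} [Field k] [CharZero k]
    {P : Type*} [Ring P] [Algebra k P]
    (perm : ∀ a b c : P, a * b * c = b * a * c)
    (δ : k) (D : P →ₗ[k] P)
    (hD : ∀ x y : P, D (x * y) = δ • (D x * y + x * D y)) :
    ∀ x y z : P,
      (δ + 1) • (x * brOp (⇑D) y z)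
        = brOp (⇑D) (x * y) z + brOp (⇑D) y (x * z) := by
  intro x y z
  have h1 : D x * y * z = y * (D x * z) := by rw [perm, mul_assoc]
  have h2 : D y * (x * z) = x * (D y * z) := by rw [← mul_assoc, perm, mul_assoc]
  have h3 : x * (y * D z) = y * (x * D z) := by rw [← mul_assoc, perm, mul_assoc]
  simp only [brOp, hD, map_sub, smul_add, smul_sub, mul_sub, sub_mul, add_mul,
    mul_add, add_smul, one_smul, smul_mul_assoc, mul_smul_comm, h1, h2, h3, mul_assoc]
  abel
end

section
/- Let (P,·) be a perm algebra with a derivation d, and define a ◇ b := a·d(b) − b·d(a). Then (P,◇) is a Lie algebra: ◇ is anti-commutative and satisfies the Jacobi identity. -/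
/-- The bracket `a ◇ b = a d(b) - b d(a)`. -/
def dia {P : Type*} [Ring P] (d : P → P) (a b : P) : P := a * d b - b * d a

/-- A perm algebra with a derivation `d` becomes a Lie algebra under `a ◇ b = a d(b) - b d(a)`:
the bracket is anti-commutative and satisfies the Jacobi identity. -/
theorem dia_lie {k : Type*} [Field k] [CharZero k]
    {P : Type*} [Ring P] [Algebra k P]
    (perm : ∀ a b c : P, a * b * c = b * a * c)
    (d : P →ₗ[k] P) (hd : ∀ a b : P, d (a * b) = d a * b + a * d b) :
    (∀ a b : P, dia (⇑d) a b = -(dia (⇑d) b a)) ∧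
    (∀ a b c : P,
      dia (⇑d) (dia (⇑d) a b) c + dia (⇑d) (dia (⇑d) b c) a
        + dia (⇑d) (dia (⇑d) c a) b = 0) := by
  constructor
  · intro a b
    simp only [dia]
    abel
  · intro a b c
    simp only [dia, map_sub, hd, mul_sub, sub_mul, mul_add, add_mul]
    noncomm_ring
    simp only [← mul_assoc]
    rw [perm c a (d (d b)), perm c b (d (d a)), perm b a (d (d c))]
    abel
end

section
/- Let A be a commutative associative algebra over a field F, generated by a set X, and let P := A ⊗ FX with multiplication (u ⊗ x)·(v ⊗ y) := (uvx) ⊗ y for u,v ∈ A and x,y ∈ X. Then P is a perm algebra: the product is associative and satisfies (ab)c = (ba)c. -/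
open TensorProduct

/-- Let `A` be a commutative associative `F`-algebra generated by (the image of) `X`,
and let `μ` be the bilinear multiplication on `A ⊗ F X` determined by
`(u ⊗ x)(v ⊗ y) = (u v x) ⊗ y`. Then this product is associative and satisfies
the perm identity `(ab)c = (ba)c`. -/
theorem tensor_perm_algebra {F : Type*} [Field F]
    {A : Type*} [CommRing A] [Algebra F A]
    {X : Type*} (ι : X → A)
    (hgen : Algebra.adjoin F (Set.range ι) = ⊤)
    (μ : (A ⊗[F] (X →₀ F)) →ₗ[F] (A ⊗[F] (X →₀ F)) →ₗ[F] (A ⊗[F] (X →₀ F)))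
    (hμ : ∀ (u v : A) (x y : X),
      μ (u ⊗ₜ[F] Finsupp.single x 1) (v ⊗ₜ[F] Finsupp.single y 1)
        = (u * v * ι x) ⊗ₜ[F] Finsupp.single y 1) :
    (∀ a b c : A ⊗[F] (X →₀ F), μ (μ a b) c = μ a (μ b c)) ∧
    (∀ a b c : A ⊗[F] (X →₀ F), μ (μ a b) c = μ (μ b a) c) := by
  set s : Set (A ⊗[F] (X →₀ F)) :=
    Set.range (fun p : A × X => p.1 ⊗ₜ[F] Finsupp.single p.2 (1 : F)) with hs
  have hmem : ∀ t : A ⊗[F] (X →₀ F), t ∈ Submodule.span F s := by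
    intro t
    induction t using TensorProduct.induction_on with
    | zero => exact zero_mem _
    | add x y hx hy => exact add_mem hx hy
    | tmul u f =>
      induction f using Finsupp.induction with
      | zero => rw [TensorProduct.tmul_zero]; exact zero_mem _
      | single_add x c f _ _ ih =>
        rw [TensorProduct.tmul_add]
        refine add_mem ?_ ih
        rw [show Finsupp.single x c = c • Finsupp.single x (1 : F) by simp,
          TensorProduct.tmul_smul]
        exact Submodule.smul_mem _ _ (Submodule.subset_span ⟨(u, x), rfl⟩)
  -- the key identities on generators
  have hgen3 : ∀ a ∈ s, ∀ b ∈ s, ∀ c ∈ s,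
      μ (μ a b) c = μ a (μ b c) ∧ μ (μ a b) c = μ (μ b a) c := by
    rintro _ ⟨⟨u, x⟩, rfl⟩ _ ⟨⟨v, y⟩, rfl⟩ _ ⟨⟨w, z⟩, rfl⟩
    simp only [hμ]
    constructor <;> · congr 1; ring
  have key : ∀ a b c : A ⊗[F] (X →₀ F),
      μ (μ a b) c = μ a (μ b c) ∧ μ (μ a b) c = μ (μ b a) c := by
    intro a b c
    induction hmem a using Submodule.span_induction with
    | zero => simp
    | add a₁ a₂ _ _ h1 h2 =>
      obtain ⟨h11, h12⟩ := h1; obtain ⟨h21, h22⟩ := h2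
      refine ⟨?_, ?_⟩
      · simp only [map_add, LinearMap.add_apply, h11, h21]
      · simp only [map_add, LinearMap.add_apply, h12, h22]
    | smul r a₁ _ h1 =>
      obtain ⟨h11, h12⟩ := h1
      refine ⟨?_, ?_⟩
      · simp only [map_smul, LinearMap.smul_apply, h11]
      · simp only [map_smul, LinearMap.smul_apply, h12]
    | mem a ha =>
      induction hmem b using Submodule.span_induction with
      | zero => simp
      | add b₁ b₂ _ _ h1 h2 =>
        obtain ⟨h11, h12⟩ := h1; obtain ⟨h21, h22⟩ := h2
        refine ⟨?_, ?_⟩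
        · simp only [map_add, LinearMap.add_apply, h11, h21]
        · simp only [map_add, LinearMap.add_apply, h12, h22]
      | smul r b₁ _ h1 =>
        obtain ⟨h11, h12⟩ := h1
        refine ⟨?_, ?_⟩
        · simp only [map_smul, LinearMap.smul_apply, h11]
        · simp only [map_smul, LinearMap.smul_apply, h12]
      | mem b hb =>
        induction hmem c using Submodule.span_induction with
        | zero => simp
        | add c₁ c₂ _ _ h1 h2 =>
          obtain ⟨h11, h12⟩ := h1; obtain ⟨h21, h22⟩ := h2
          refine ⟨?_, ?_⟩
          · simp only [map_add, LinearMap.add_apply, h11, h21]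
          · simp only [map_add, LinearMap.add_apply, h12, h22]
        | smul r c₁ _ h1 =>
          obtain ⟨h11, h12⟩ := h1
          refine ⟨?_, ?_⟩
          · simp only [map_smul, LinearMap.smul_apply, h11]
          · simp only [map_smul, LinearMap.smul_apply, h12]
        | mem c hc => exact hgen3 a ha b hb c hc
  exact ⟨fun a b c => (key a b c).1, fun a b c => (key a b c).2⟩
end

section
/- Let (P,·) be a perm algebra and let D₁,…,Dₙ be pairwise commuting derivations of P. On the space W = ⊕ᵢ P·Dᵢ define (aDᵢ) ≺ (bDⱼ) := (a·Dᵢ(b))Dⱼ. Then (W,≺) is a left-symmetric (pre-Lie) algebra: the associator (X,Y,Z) = (X≺Y)≺Z − X≺(Y≺Z) is symmetric in X and Y. -/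
/-- The product `(aDᵢ) ≺ (bDⱼ) := (a·Dᵢ(b))Dⱼ` on `W = ⊕ᵢ P Dᵢ`, extended bilinearly:
`(u ≺ v)ⱼ = ∑ᵢ uᵢ · Dᵢ(vⱼ)`. -/
def precW {P : Type*} [Ring P] {n : ℕ} (D : Fin n → P → P)
    (u v : Fin n → P) : Fin n → P :=
  fun j => ∑ i, u i * D i (v j)

/-- For a perm algebra `P` with pairwise commuting derivations `D₁,…,Dₙ`,
`(W, ≺)` is a left-symmetric (pre-Lie) algebra. -/
theorem precW_left_symmetric {k : Type*} [Field k] [CharZero k]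
    {P : Type*} [Ring P] [Algebra k P] {n : ℕ}
    (perm : ∀ a b c : P, a * b * c = b * a * c)
    (D : Fin n → P →ₗ[k] P)
    (hleib : ∀ i, ∀ a b : P, D i (a * b) = D i a * b + a * D i b)
    (hcomm : ∀ i j, ∀ a : P, D i (D j a) = D j (D i a)) :
    ∀ X Y Z : Fin n → P,
      precW (fun i => ⇑(D i)) (precW (fun i => ⇑(D i)) X Y) Z
          - precW (fun i => ⇑(D i)) X (precW (fun i => ⇑(D i)) Y Z)
        = precW (fun i => ⇑(D i)) (precW (fun i => ⇑(D i)) Y X) Z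
          - precW (fun i => ⇑(D i)) Y (precW (fun i => ⇑(D i)) X Z) := by
  intro X Y Z
  funext j
  have key : ∀ U V : Fin n → P,
      (precW (fun i => ⇑(D i)) (precW (fun i => ⇑(D i)) U V) Z
        - precW (fun i => ⇑(D i)) U (precW (fun i => ⇑(D i)) V Z)) j
      = -∑ i, ∑ l, U i * V l * D i (D l (Z j)) := by
    intro U V
    simp only [precW, Pi.sub_apply, map_sum]
    have h1 : ∀ i l, (D i) (V l * D l (Z j))
        = D i (V l) * D l (Z j) + V l * D i (D l (Z j)) := fun i l => hleib i _ _
    simp only [h1, mul_add, Finset.mul_sum, Finset.sum_mul, Finset.sum_add_distrib]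
    have h2 : ∑ i, ∑ l, U l * D l (V i) * D i (Z j)
        = ∑ i, ∑ l, U i * (D i (V l) * D l (Z j)) := by
      rw [Finset.sum_comm]
      exact Finset.sum_congr rfl fun i _ => Finset.sum_congr rfl fun l _ => (mul_assoc _ _ _)
    rw [h2]
    abel_nf
    congr 1
    exact Finset.sum_congr rfl fun i _ => Finset.sum_congr rfl fun l _ => (mul_assoc _ _ _).symm
  rw [key X Y, key Y X]
  congr 1
  rw [Finset.sum_comm]
  refine Finset.sum_congr rfl fun i _ => Finset.sum_congr rfl fun l _ => ?_
  rw [hcomm l i, perm]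
end

section
/- Let (P,·) be a perm algebra with pairwise commuting derivations D₁,…,Dₙ. On W = ⊕ᵢ P·Dᵢ define [aDᵢ, bDⱼ]∘ := (Dⱼ(a)·b)Dᵢ − (a·Dᵢ(b))Dⱼ. Then (W, [·,·]∘) is a left Leibniz algebra: [[X,Y]∘,Z]∘ = [X,[Y,Z]∘]∘ − [Y,[X,Z]∘]∘ for all X,Y,Z ∈ W. -/
/-- The bracket `[aDᵢ, bDⱼ]∘ := (Dⱼ(a)·b)Dᵢ − (a·Dᵢ(b))Dⱼ` on `W = ⊕ᵢ P Dᵢ`,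
extended bilinearly: `[u,v]ₘ = ∑ⱼ Dⱼ(uₘ)·vⱼ − ∑ᵢ uᵢ·Dᵢ(vₘ)`. -/
def brW {P : Type*} [Ring P] {n : ℕ} (D : Fin n → P → P)
    (u v : Fin n → P) : Fin n → P :=
  fun m => (∑ j, D j (u m) * v j) - ∑ i, u i * D i (v m)

/-- For a perm algebra `P` with pairwise commuting derivations `D₁,…,Dₙ`,
`(W, [·,·]∘)` is a left Leibniz algebra. -/
theorem brW_left_leibniz {k : Type*} [Field k] [CharZero k]
    {P : Type*} [Ring P] [Algebra k P] {n : ℕ}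
    (perm : ∀ a b c : P, a * b * c = b * a * c)
    (D : Fin n → P →ₗ[k] P)
    (hleib : ∀ i, ∀ a b : P, D i (a * b) = D i a * b + a * D i b)
    (hcomm : ∀ i j, ∀ a : P, D i (D j a) = D j (D i a)) :
    ∀ X Y Z : Fin n → P,
      brW (fun i => ⇑(D i)) (brW (fun i => ⇑(D i)) X Y) Z
        = brW (fun i => ⇑(D i)) X (brW (fun i => ⇑(D i)) Y Z)
          - brW (fun i => ⇑(D i)) Y (brW (fun i => ⇑(D i)) X Z) := by
  intro X Y Z
  funext m
  have key : ∀ F G : Fin n → Fin n → P, (∀ x i, F i x = G x i) →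
      (∑ x, ∑ i, F x i) = ∑ x, ∑ i, G x i := by
    intro F G h
    rw [Finset.sum_comm]
    exact Finset.sum_congr rfl fun x _ => Finset.sum_congr rfl fun i _ => h x i
  simp only [brW, map_sub, map_sum, hleib, sub_mul, add_mul, mul_sub, mul_add,
    Finset.sum_sub_distrib, Finset.sum_add_distrib, Finset.sum_mul, Finset.mul_sum,
    Pi.sub_apply, ← mul_assoc]
  -- R1 → L2
  rw [key (fun x i => D x (X m) * D i (Y x) * Z i)
        (fun x i => D i (X m) * D x (Y i) * Z x) (fun x i => rfl)]
  -- R2 → C1 (kept, cancels with R10)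
  -- R3 → L4
  rw [key (fun x i => X x * D x (D i (Y m)) * Z i)
        (fun x i => X i * D x (D i (Y m)) * Z x) (fun x i => by beta_reduce; rw [hcomm])]
  -- R4 kept; R8 → R4
  rw [key (fun x i => D x (Y m) * X i * D i (Z x))
        (fun x i => X x * D i (Y m) * D x (Z i)) (fun x i => by beta_reduce; rw [perm])]
  -- R5 → L6
  rw [key (fun x i => X x * D x (Y i) * D i (Z m))
        (fun x i => X i * D i (Y x) * D x (Z m)) (fun x i => rfl)]
  -- R7 → L3
  rw [key (fun x i => D x (Y m) * D i (X x) * Z i)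
        (fun x i => D x (X i) * D i (Y m) * Z x) (fun x i => by beta_reduce; rw [perm])]
  -- R9 → L1
  rw [key (fun x i => Y x * D x (D i (X m)) * Z i)
        (fun x i => D x (D i (X m)) * Y i * Z x) (fun x i => by beta_reduce; rw [perm, hcomm])]
  -- R10 → C1
  rw [key (fun x i => Y x * D i (X m) * D x (Z i))
        (fun x i => D x (X m) * Y i * D i (Z x)) (fun x i => by beta_reduce; rw [perm])]
  -- R11 → L5
  rw [key (fun x i => Y x * D x (X i) * D i (Z m))
        (fun x i => D i (X x) * Y i * D x (Z m)) (fun x i => by beta_reduce; rw [perm])]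
  -- R12 → R6
  rw [key (fun x i => Y x * X i * D x (D i (Z m)))
        (fun x i => X x * Y i * D x (D i (Z m))) (fun x i => by beta_reduce; rw [perm, hcomm])]
  abel
end

section
/- Let (A,·,d) be a differential perm algebra, write a' = d(a) and a • b := a'b + ab'. Then for all x₁,x₂,x₃ ∈ A: ((x₁'x₂x₃))' = ½((x₁•x₂)•x₃ + x₂•(x₁•x₃) − x₁•(x₂•x₃)), i.e. 2·d(x₁'x₂x₃) = (x₁•x₂)•x₃ + x₂•(x₁•x₃) − x₁•(x₂•x₃). -/
/-- In a differential perm algebra,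
`2 d(x₁'x₂x₃) = (x₁•x₂)•x₃ + x₂•(x₁•x₃) − x₁•(x₂•x₃)`. -/
theorem der_x1'x2x3_eq_bu {k : Type*} [Field k] [CharZero k]
    {A : Type*} [Ring A] [Algebra k A]
    (perm : ∀ a b c : A, a * b * c = b * a * c)
    (d : A →ₗ[k] A) (hd : ∀ a b : A, d (a * b) = d a * b + a * d b) :
    ∀ x₁ x₂ x₃ : A,
      2 • d (d x₁ * x₂ * x₃)
        = bu (⇑d) (bu (⇑d) x₁ x₂) x₃ + bu (⇑d) x₂ (bu (⇑d) x₁ x₃)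
          - bu (⇑d) x₁ (bu (⇑d) x₂ x₃) := by
  intro x₁ x₂ x₃
  simp only [bu, hd, map_add, mul_add, add_mul, ← mul_assoc, two_smul]
  rw [perm (d x₂) (d x₁) x₃, perm (d x₂) x₁ (d x₃), perm x₂ (d (d x₁)) x₃,
      perm x₂ (d x₁) (d x₃), perm x₂ x₁ (d (d x₃))]
  abel
end

section
/- Let (A,·,d) be a differential perm algebra, a' = d(a), a • b := a'b + ab'. Then for all x₁,x₂,x₃ ∈ A: 2·d(x₁x₂x₃') = x₂•(x₁•x₃) + x₁•(x₂•x₃) − (x₁•x₂)•x₃. -/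
/-- In a differential perm algebra,
`2 d(x₁x₂x₃') = x₂•(x₁•x₃) + x₁•(x₂•x₃) − (x₁•x₂)•x₃`. -/
theorem der_x1x2x3'_eq_bu {k : Type*} [Field k] [CharZero k]
    {A : Type*} [Ring A] [Algebra k A]
    (perm : ∀ a b c : A, a * b * c = b * a * c)
    (d : A →ₗ[k] A) (hd : ∀ a b : A, d (a * b) = d a * b + a * d b) :
    ∀ x₁ x₂ x₃ : A,
      2 • d (x₁ * x₂ * d x₃)
        = bu (⇑d) x₂ (bu (⇑d) x₁ x₃) + bu (⇑d) x₁ (bu (⇑d) x₂ x₃)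
          - bu (⇑d) (bu (⇑d) x₁ x₂) x₃ := by
  have perm' : ∀ a b c : A, a * (b * c) = b * (a * c) := by
    intro a b c; rw [← mul_assoc, ← mul_assoc, perm]
  intro x₁ x₂ x₃
  simp only [bu, hd, map_add, mul_add, add_mul, two_smul, mul_assoc]
  rw [perm' (d x₂) (d x₁) x₃, perm' (d x₂) x₁ (d x₃), perm' x₂ (d (d x₁)) x₃,
    perm' x₂ (d x₁) (d x₃), perm' x₂ x₁ (d (d x₃))]
  abel
end
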